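/- Let δ = −2η ∑_{k=1}^N cos(x_k, x_i) h_k with all ‖x_j‖₂ = 1, h_k = ReLU(W x_k), and suppose the activation pattern of x_i is preserved (|δ[p]| < |(W x_i)[p]| for all p, and no entry of W x_i is zero). Then the change in l¹ norm of h_i is exactly Δ_{l1} = −2η ∑_{k=1}^N cos(x_k, x_i) ‖h_k ⊙ m_i‖₁, where m_i is the mask of positive entries of W x_i. -/
import Mathlib


noncomputable section

def relu (v : ℝ) : ℝ := max v 0

def matVec {n m : ℕ} (W : Fin n → Fin m → ℝ) (x : Fin m → ℝ) : Fin n → ℝ :=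
  fun p => ∑ q, W p q * x q

def mask {n : ℕ} (v : Fin n → ℝ) : Fin n → ℝ := fun p => if 0 < v p then 1 else 0

def l1 {n : ℕ} (v : Fin n → ℝ) : ℝ := ∑ p, |v p|

def l2 {n : ℕ} (v : Fin n → ℝ) : ℝ := Real.sqrt (∑ p, (v p) ^ 2)

def cosv {m : ℕ} (u v : Fin m → ℝ) : ℝ := (∑ q, u q * v q) / (l2 u * l2 v)

theorem l1_change_formula {n m N : ℕ} (η : ℝ) (hη : 0 < η)
    (W : Fin n → Fin m → ℝ) (x : Fin N → Fin m → ℝ) (xi : Fin m → ℝ)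
    (hx : ∀ k, l2 (x k) = 1) (hxi : l2 xi = 1)
    (h : Fin N → Fin n → ℝ) (hdef : ∀ k, h k = fun p => relu (matVec W (x k) p))
    (δ : Fin n → ℝ)
    (hδ : δ = fun p => -2 * η * ∑ k, cosv (x k) xi * h k p)
    (hnz : ∀ p, matVec W xi p ≠ 0)
    (hsmall : ∀ p, |δ p| < |matVec W xi p|) :
    l1 (fun p => relu (matVec W xi p + δ p)) - l1 (fun p => relu (matVec W xi p)) =
      -2 * η * ∑ k, cosv (x k) xi * l1 (fun p => h k p * mask (matVec W xi) p) := by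
  have hk_nonneg : ∀ k p, 0 ≤ h k p := by
    intro k p; rw [hdef k]; exact le_max_right _ _
  have key : ∀ p, relu (matVec W xi p + δ p) - relu (matVec W xi p)
      = δ p * mask (matVec W xi) p := by
    intro p
    rcases lt_or_gt_of_ne (hnz p) with hneg | hpos
    · have h1 : matVec W xi p + δ p ≤ 0 := by
        have := hsmall p
        rw [abs_of_neg hneg] at this
        cases abs_cases (δ p) with
        | inl hc => linarith [hc.1]
        | inr hc => linarith [hc.1]
      simp [relu, mask, max_eq_right h1, max_eq_right hneg.le, not_lt.mpr hneg.le]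
    · have h1 : 0 ≤ matVec W xi p + δ p := by
        have := hsmall p
        rw [abs_of_pos hpos] at this
        cases abs_cases (δ p) with
        | inl hc => linarith [hc.1]
        | inr hc => linarith [hc.1]
      simp [relu, mask, max_eq_left h1, max_eq_left hpos.le, hpos]
  have habs : ∀ p, |relu (matVec W xi p + δ p)| = relu (matVec W xi p + δ p) :=
    fun p => abs_of_nonneg (le_max_right _ _)
  have habs2 : ∀ p, |relu (matVec W xi p)| = relu (matVec W xi p) :=
    fun p => abs_of_nonneg (le_max_right _ _)
  have hmask_nonneg : ∀ p, 0 ≤ mask (matVec W xi) p := by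
    intro p; unfold mask; positivity
  unfold l1
  simp only [habs, habs2]
  rw [← Finset.sum_sub_distrib]
  simp only [key]
  rw [hδ]
  simp only [Finset.sum_mul, mul_assoc, Finset.mul_sum]
  rw [Finset.sum_comm]
  apply Finset.sum_congr rfl
  intro k _
  apply Finset.sum_congr rfl
  intro p _
  rw [abs_of_nonneg (mul_nonneg (hk_nonneg k p) (hmask_nonneg p))]
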